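/- Let 0 < m ≤ a ≤ M, 0 < m ≤ b ≤ M, and v ∈ [0,1]. Then (1-v)a + vb - a^(1-v)b^v ≤ max{g_v(h), g_v(1/h)}·a ≤ L(1,h)·log S(h)·a, where h = M/m, g_v(x) = (1-v)+vx-x^v, L(1,h) = (h-1)/log h, and S(h) is the Specht ratio. -/

import Mathlib

/-!
Writing `b = a x` with `x = b / a ∈ [1/h, h]`, the left-hand side is `a · g_v(x)`, and `g_v` is
convex, so on `[1/h, h]` it is bounded by its values at the endpoints. For the second inequality,
`h ^ v = exp (v log h)` lies above the tangent line of `exp` at `log L`, `L = L(1, h)`, which gives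
`g_v(h) ≤ 1 - L + L log L = L log S(h)` uniformly in `v`; and `g_v(1/h) = g_{1-v}(h) / h ≤ g_{1-v}(h)`.
-/

open Real Set

noncomputable section

/-- `g_v(x)`. -/
def youngGap (v x : ℝ) : ℝ := (1 - v) + v * x - x ^ v

/-- The logarithmic mean `L(1, h)` of `1` and `h`. -/
def logMean (h : ℝ) : ℝ := (h - 1) / log h

def spechtRatio (h : ℝ) : ℝ := h ^ (1 / (h - 1)) / (exp 1 * (1 / (h - 1) * log h))

end

section YoungGap

variable {v x : ℝ}

theorem youngGap_nonneg (hx : 0 ≤ x) (hv0 : 0 ≤ v) (hv1 : v ≤ 1) : 0 ≤ youngGap v x := by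
  have := rpow_one_add_le_one_add_mul_self (s := x - 1) (by linarith) hv0 hv1
  rw [add_sub_cancel] at this
  unfold youngGap
  linarith

theorem convexOn_youngGap (hv0 : 0 ≤ v) (hv1 : v ≤ 1) : ConvexOn ℝ (Ici 0) (youngGap v) := by
  have hlin : ConvexOn ℝ (Ici (0 : ℝ)) fun x ↦ (1 - v) + v * x :=
    (convexOn_const _ (convex_Ici 0)).add ((convexOn_id (convex_Ici 0)).smul hv0)
  exact hlin.sub (concaveOn_rpow hv0 hv1)

theorem mul_youngGap_div {a b : ℝ} (ha : 0 < a) (hb : 0 ≤ b) :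
    a * youngGap v (b / a) = (1 - v) * a + v * b - a ^ (1 - v) * b ^ v := by
  rw [youngGap, div_rpow hb ha.le, rpow_sub ha, rpow_one]
  field_simp

theorem youngGap_inv (hx : 0 < x) : youngGap v x⁻¹ = youngGap (1 - v) x / x := by
  rw [youngGap, youngGap, inv_rpow hx.le, rpow_sub hx, rpow_one]
  field_simp
  ring

theorem youngGap_inv_le (hx : 1 ≤ x) (hv0 : 0 ≤ v) (hv1 : v ≤ 1) :
    youngGap v x⁻¹ ≤ youngGap (1 - v) x := by
  rw [youngGap_inv (by linarith)]
  exact div_le_self (youngGap_nonneg (by linarith) (by linarith) (by linarith)) hx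

theorem youngGap_le_max_of_mem_Icc {p q : ℝ} (hp : 0 ≤ p) (hv0 : 0 ≤ v) (hv1 : v ≤ 1)
    (hx : x ∈ Icc p q) : youngGap v x ≤ max (youngGap v p) (youngGap v q) :=
  (convexOn_youngGap hv0 hv1).le_on_segment hp (hp.trans (hx.1.trans hx.2))
    (segment_eq_Icc (hx.1.trans hx.2) ▸ hx)

end YoungGap

section LogMean

variable {h : ℝ}

theorem logMean_pos (h0 : 0 < h) (h1 : h ≠ 1) : 0 < logMean h := by
  rcases h1.lt_or_gt with hlt | hgt
  · exact div_pos_of_neg_of_neg (by linarith) (log_neg h0 hlt)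
  · exact div_pos (by linarith) (log_pos hgt)

theorem logMean_mul_log (h0 : 0 < h) (h1 : h ≠ 1) : logMean h * log h = h - 1 :=
  div_mul_cancel₀ _ (log_ne_zero_of_pos_of_ne_one h0 h1)

theorem mul_sub_log_add_one_le_exp {L : ℝ} (hL : 0 < L) (t : ℝ) :
    L * (t - log L + 1) ≤ exp t := by
  calc L * (t - log L + 1) ≤ L * exp (t - log L) := by gcongr; exact add_one_le_exp _
    _ = exp t := by rw [exp_sub, exp_log hL]; field_simp

theorem youngGap_le_logMean (h0 : 0 < h) (h1 : h ≠ 1) (v : ℝ) :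
    youngGap v h ≤ 1 - logMean h + logMean h * log (logMean h) := by
  have htangent := mul_sub_log_add_one_le_exp (logMean_pos h0 h1) (v * log h)
  have hL : logMean h * (v * log h) = v * (h - 1) := by
    rw [mul_left_comm, logMean_mul_log h0 h1]
  rw [mul_comm v, ← rpow_def_of_pos h0] at htangent
  unfold youngGap
  linarith

theorem logMean_mul_log_spechtRatio (h0 : 0 < h) (h1 : h ≠ 1) :
    logMean h * log (spechtRatio h) = 1 - logMean h + logMean h * log (logMean h) := by
  have hlog : log h ≠ 0 := log_ne_zero_of_pos_of_ne_one h0 h1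
  have hsub : h - 1 ≠ 0 := sub_ne_zero.mpr h1
  have hinv : 1 / (h - 1) * log h = (logMean h)⁻¹ := by
    rw [logMean]; field_simp
  have hL : logMean h ≠ 0 := (logMean_pos h0 h1).ne'
  rw [spechtRatio, hinv, log_div (rpow_pos_of_pos h0 _).ne' (by positivity),
    log_mul (exp_pos 1).ne' (inv_ne_zero hL), log_exp, log_inv, log_rpow h0, logMean]
  field_simp
  ring

end LogMean

theorem stmt_19 (a b m M v : ℝ) (hm : 0 < m) (hmM : m < M)
    (ha1 : m ≤ a) (ha2 : a ≤ M) (hb1 : m ≤ b) (hb2 : b ≤ M)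
    (hv0 : 0 ≤ v) (hv1 : v ≤ 1) :
    (1 - v) * a + v * b - a ^ (1 - v) * b ^ v ≤
      max ((1 - v) + v * (M / m) - (M / m) ^ v)
          ((1 - v) + v * (m / M) - (M / m) ^ (-v)) * a ∧
    max ((1 - v) + v * (M / m) - (M / m) ^ v)
        ((1 - v) + v * (m / M) - (M / m) ^ (-v)) * a ≤
      (M / m - 1) / Real.log (M / m) *
        Real.log ((M / m) ^ (1 / (M / m - 1)) /
          (Real.exp 1 * ((1 / (M / m - 1)) * Real.log (M / m)))) * a := by
  have hM : 0 < M := hm.trans hmM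
  have ha : 0 < a := hm.trans_le ha1
  have hh : 1 < M / m := (one_lt_div hm).mpr hmM
  have hmax : max ((1 - v) + v * (M / m) - (M / m) ^ v)
      ((1 - v) + v * (m / M) - (M / m) ^ (-v)) = max (youngGap v (m / M)) (youngGap v (M / m)) := by
    rw [rpow_neg (by positivity), ← inv_rpow (by positivity), inv_div, max_comm, youngGap, youngGap]
  have hab : b / a ∈ Icc (m / M) (M / m) :=
    ⟨by rw [div_le_div_iff₀ hM ha]; nlinarith, by rw [div_le_div_iff₀ ha hm]; nlinarith⟩
  rw [hmax]
  change _ ≤ _ ∧ _ ≤ logMean (M / m) * log (spechtRatio (M / m)) * a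
  rw [logMean_mul_log_spechtRatio (by positivity) hh.ne', ← mul_youngGap_div ha (by linarith),
    mul_comm a]
  refine ⟨?_, ?_⟩
  · gcongr
    exact youngGap_le_max_of_mem_Icc (by positivity) hv0 hv1 hab
  · gcongr
    refine max_le ?_ (youngGap_le_logMean (by positivity) hh.ne' v)
    rw [← inv_div]
    exact (youngGap_inv_le hh.le hv0 hv1).trans (youngGap_le_logMean (by positivity) hh.ne' _)
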